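/- Let 0 < q < 1, R > 0, b ∈ ℂ, and let u : ℂ → ℂ be continuous on the closed disc {|z| ≤ R} with u(0) = b, and suppose F : ℂ → ℂ is continuous on the closed disc with F(0) = b/Γ(1−q) and |F(ζ) − b/Γ(1−q)| ≤ M·|ζ|/R for all |ζ| ≤ R. Define Tu(z) = (1/Γ(q)) ∫₀ᶻ ζ^{−q} F(ζ) (z−ζ)^{q−1} dζ (segment integral). Then |Tu(z) − b| ≤ M·Γ(2−q)·|z|/R for all z in the closed disc of radius R. -/

import Mathlib

/-!
With `c = b / Γ(1 - q)`, the Beta integral `B(1 - q, q) = Γ(1 - q) Γ(q)` gives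
`b = (1/Γ(q)) ∫₀¹ t^{-q} (1 - t)^{q-1} c dt`, so `Tu(z) - b` is the same integral with
`F(zt) - c` in place of `F(zt)`. Since `|F(zt) - c| ≤ (M |z| / R) t`, the extra factor `t`
turns the kernel into that of `B(2 - q, q) = Γ(2 - q) Γ(q)`, and the `Γ(q)` cancels.
-/

open Complex Metric Real

open MeasureTheory intervalIntegral Set

lemma ofReal_rpow_mul_one_sub_rpow {a b t : ℝ} (ht : t ∈ Icc (0 : ℝ) 1) :
    ((t ^ (a - 1) * (1 - t) ^ (b - 1) : ℝ) : ℂ) =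
      (t : ℂ) ^ ((a : ℂ) - 1) * (1 - (t : ℂ)) ^ ((b : ℂ) - 1) := by
  rw [ofReal_mul, ofReal_cpow ht.1, ofReal_cpow (sub_nonneg.2 ht.2)]
  push_cast
  rfl

lemma intervalIntegrable_ofReal_rpow_mul_one_sub_rpow {a b : ℝ} (ha : 0 < a) (hb : 0 < b) :
    IntervalIntegrable (fun t : ℝ => ((t ^ (a - 1) * (1 - t) ^ (b - 1) : ℝ) : ℂ))
      volume 0 1 := by
  refine (betaIntegral_convergent (u := a) (v := b) (by simpa) (by simpa)).congr_ae ?_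
  rw [uIoc_of_le zero_le_one, Filter.EventuallyEq, ae_restrict_iff' measurableSet_Ioc]
  exact Filter.Eventually.of_forall fun t ht =>
    (ofReal_rpow_mul_one_sub_rpow (Ioc_subset_Icc_self ht)).symm

lemma intervalIntegrable_rpow_mul_one_sub_rpow {a b : ℝ} (ha : 0 < a) (hb : 0 < b) :
    IntervalIntegrable (fun t : ℝ => t ^ (a - 1) * (1 - t) ^ (b - 1)) volume 0 1 := by
  have h := intervalIntegrable_ofReal_rpow_mul_one_sub_rpow ha hb
  have hre := h.1.re
  simp only [RCLike.re_to_complex, ofReal_re] at hre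
  exact (intervalIntegrable_iff_integrableOn_Ioc_of_le zero_le_one).2 hre

lemma integral_rpow_mul_one_sub_rpow {a b : ℝ} (ha : 0 < a) (hb : 0 < b) :
    ∫ t in (0 : ℝ)..1, t ^ (a - 1) * (1 - t) ^ (b - 1) =
      Real.Gamma a * Real.Gamma b / Real.Gamma (a + b) := by
  apply ofReal_injective
  have hbeta := betaIntegral_eq_Gamma_mul_div a b (by simpa) (by simpa)
  rw [betaIntegral, ← ofReal_add, Gamma_ofReal, Gamma_ofReal, Gamma_ofReal] at hbeta
  push_cast
  rw [← hbeta, ← intervalIntegral.integral_ofReal]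
  refine integral_congr fun t ht => ?_
  exact ofReal_rpow_mul_one_sub_rpow (by rwa [uIcc_of_le zero_le_one] at ht)

lemma norm_integral_ofReal_rpow_mul_one_sub_rpow_mul_le {a b K : ℝ} (ha : 0 < a) (hb : 0 < b)
    {g : ℝ → ℂ} (hg : ∀ t ∈ Ioc (0 : ℝ) 1, ‖g t‖ ≤ K * t) :
    ‖∫ t in (0 : ℝ)..1, ((t ^ (a - 1) * (1 - t) ^ (b - 1) : ℝ) : ℂ) * g t‖ ≤
      K * (Real.Gamma (a + 1) * Real.Gamma b / Real.Gamma (a + b + 1)) := by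
  have hint := intervalIntegrable_rpow_mul_one_sub_rpow (a := a + 1) (b := b) (by linarith) hb
  calc _ ≤ ∫ t in (0 : ℝ)..1, K * (t ^ (a + 1 - 1) * (1 - t) ^ (b - 1)) := by
        refine norm_integral_le_of_norm_le zero_le_one
          (Filter.Eventually.of_forall fun t ht => ?_) (hint.const_mul K)
        have hw : 0 ≤ t ^ (a - 1) * (1 - t) ^ (b - 1) :=
          mul_nonneg (rpow_nonneg ht.1.le _) (rpow_nonneg (sub_nonneg.2 ht.2) _)
        rw [norm_mul, norm_real, Real.norm_of_nonneg hw, add_sub_cancel_right]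
        calc _ ≤ t ^ (a - 1) * (1 - t) ^ (b - 1) * (K * t) :=
              mul_le_mul_of_nonneg_left (hg t ht) hw
          _ = _ := by rw [rpow_sub_one ht.1.ne']; field_simp [ht.1.ne']
    _ = _ := by
      rw [intervalIntegral.integral_const_mul, integral_rpow_mul_one_sub_rpow (by linarith) hb,
        add_right_comm]

lemma integral_ofReal_rpow_mul_one_sub_rpow_mul_sub {a b : ℝ} (ha : 0 < a) (hb : 0 < b)
    {g : ℝ → ℂ} (hg : ContinuousOn g (uIcc 0 1)) (c : ℂ) :
    ∫ t in (0 : ℝ)..1, ((t ^ (a - 1) * (1 - t) ^ (b - 1) : ℝ) : ℂ) * (g t - c) =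
      (∫ t in (0 : ℝ)..1, ((t ^ (a - 1) * (1 - t) ^ (b - 1) : ℝ) : ℂ) * g t) -
        ((Real.Gamma a * Real.Gamma b / Real.Gamma (a + b) : ℝ) : ℂ) * c := by
  have hw := intervalIntegrable_ofReal_rpow_mul_one_sub_rpow ha hb
  simp_rw [mul_sub]
  rw [integral_sub (hw.mul_continuousOn hg) (hw.mul_const c),
    intervalIntegral.integral_mul_const, intervalIntegral.integral_ofReal,
    integral_rpow_mul_one_sub_rpow ha hb]

lemma norm_mul_ofReal_le {z : ℂ} {t : ℝ} (ht : t ∈ Icc (0 : ℝ) 1) :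
    ‖z * t‖ ≤ ‖z‖ := by
  rw [norm_mul, norm_real, Real.norm_of_nonneg ht.1]
  exact mul_le_of_le_one_right (norm_nonneg z) ht.2

theorem operator_estimate_general
    (q R M : ℝ) (hq0 : 0 < q) (hq1 : q < 1) (b : ℂ)
    (F : ℂ → ℂ)
    (hF_cont : ContinuousOn F (closedBall (0 : ℂ) R))
    (hF_bd : ∀ ζ : ℂ, ‖ζ‖ ≤ R → ‖F ζ - b / (Real.Gamma (1 - q) : ℂ)‖ ≤ M * ‖ζ‖ / R)
    (Tu : ℂ → ℂ)
    (hTu : ∀ z : ℂ, Tu z =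
      (1 / (Real.Gamma q : ℂ)) *
        ∫ t in (0:ℝ)..1, (((t ^ (-q) * (1 - t) ^ (q - 1) : ℝ)) : ℂ) * F (z * t)) :
    ∀ z : ℂ, ‖z‖ ≤ R → ‖Tu z - b‖ ≤ M * Real.Gamma (2 - q) * ‖z‖ / R := by
  intro z hz
  have hq1' : 0 < 1 - q := sub_pos.2 hq1
  have hΓq := Real.Gamma_pos_of_pos hq0
  have hΓ1q : (Real.Gamma (1 - q) : ℂ) ≠ 0 := ofReal_ne_zero.2 (Real.Gamma_pos_of_pos hq1').ne'
  have hFz : ContinuousOn (fun t : ℝ => F (z * t)) (uIcc 0 1) :=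
    hF_cont.comp (by fun_prop) fun t ht => mem_closedBall_zero_iff.2
      ((norm_mul_ofReal_le (by rwa [uIcc_of_le zero_le_one] at ht)).trans hz)
  have hsplit := integral_ofReal_rpow_mul_one_sub_rpow_mul_sub hq1' hq0 hFz
    (b / (Real.Gamma (1 - q) : ℂ))
  have hbound := norm_integral_ofReal_rpow_mul_one_sub_rpow_mul_le hq1' hq0
    (K := M * ‖z‖ / R) (g := fun t => F (z * t) - b / (Real.Gamma (1 - q) : ℂ)) fun t ht =>
      calc _ ≤ M * ‖z * t‖ / R :=
            hF_bd _ ((norm_mul_ofReal_le (Ioc_subset_Icc_self ht)).trans hz)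
        _ = M * ‖z‖ / R * t := by rw [norm_mul, norm_real, Real.norm_of_nonneg ht.1.le]; ring
  rw [sub_sub_cancel_left, sub_add_cancel, Real.Gamma_one, div_one] at hsplit
  rw [sub_sub_cancel_left, show 1 - q + 1 = 2 - q by ring, sub_add_cancel, one_add_one_eq_two,
    Real.Gamma_two, div_one, hsplit] at hbound
  have hTu_sub : Tu z - b = (1 / (Real.Gamma q : ℂ)) * ((∫ t in (0:ℝ)..1,
      (((t ^ (-q) * (1 - t) ^ (q - 1) : ℝ)) : ℂ) * F (z * t)) -
        ((Real.Gamma (1 - q) * Real.Gamma q : ℝ) : ℂ) * (b / (Real.Gamma (1 - q) : ℂ))) := by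
    rw [hTu]
    push_cast
    field_simp [ofReal_ne_zero.2 hΓq.ne']
  rw [hTu_sub, norm_mul, norm_div, norm_one, norm_real, Real.norm_of_nonneg hΓq.le]
  calc _ ≤ 1 / Real.Gamma q * (M * ‖z‖ / R * (Real.Gamma (2 - q) * Real.Gamma q)) := by gcongr
    _ = _ := by field_simp

/-- The bound `|Tu(z) - b| ≤ M Γ(2-q) |z| / R`, with the operator written after
the change of variable ζ = zt, so that
`Tu(z) = (1/Γ(q)) ∫₀¹ t^{-q}(1-t)^{q-1} F(zt) dt` where `F(ζ) = ζ^q f(ζ, u(ζ))`. -/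
theorem operator_estimate
    (q R M : ℝ) (hq0 : 0 < q) (hq1 : q < 1) (hR : 0 < R) (b : ℂ)
    (u : ℂ → ℂ)
    (hu_cont : ContinuousOn u (closedBall (0 : ℂ) R))
    (hu0 : u 0 = b)
    (F : ℂ → ℂ)
    (hF_cont : ContinuousOn F (closedBall (0 : ℂ) R))
    (hF0 : F 0 = b / (Real.Gamma (1 - q) : ℂ))
    (hF_bd : ∀ ζ : ℂ, ‖ζ‖ ≤ R → ‖F ζ - b / (Real.Gamma (1 - q) : ℂ)‖ ≤ M * ‖ζ‖ / R)
    (Tu : ℂ → ℂ)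
    (hTu : ∀ z : ℂ, Tu z =
      (1 / (Real.Gamma q : ℂ)) *
        ∫ t in (0:ℝ)..1, (((t ^ (-q) * (1 - t) ^ (q - 1) : ℝ)) : ℂ) * F (z * t)) :
    ∀ z : ℂ, ‖z‖ ≤ R → ‖Tu z - b‖ ≤ M * Real.Gamma (2 - q) * ‖z‖ / R :=
  operator_estimate_general q R M hq0 hq1 b F hF_cont hF_bd Tu hTu
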